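/- arXiv:0811.4725 — 12 statements merged into one kernel-verified Lean document; each statement's English description precedes it below -/
import Mathlib

section
/- Let α, β, γ, δ, μ be real constants, and on the interval (1,∞) define A = B = C = 0, D(x) = β/ln x, E(x) = −β + γ/ln x, G(x) = 1/ln x, L(x) = αβ + 2β² + δ·ln x − βγ/ln x, M(x) = αγ + 3βγ + μ·ln x − δ·(ln x)² − γ²/ln x, N(x) = α + β − γ/ln x. Then these functions satisfy the system D′ = DB + LC − AE − DG, L′ = DE + LG − AM − DN, E′ = MC − EG − D, M′ = E² + MG − BM − EN − L, G′ = GB + NC − CE − G² + A, N′ = GE − CM + D on (1,∞), where F′ denotes x·(dF/dx). -/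
/-! Each of `D, E, G, L, M, N` is a function `a + b t + c t² + d / t` of `t = log x`, and the Euler
operator `x · d/dx` acts on functions of `log x` as `d/dt`. The system then reduces to rational
identities in `t`. -/

open Real

noncomputable def quadLaurent (a b c d t : ℝ) : ℝ := a + b * t + c * t ^ 2 + d / t

theorem hasDerivAt_quadLaurent (a b c d : ℝ) {t : ℝ} (ht : t ≠ 0) :
    HasDerivAt (quadLaurent a b c d) (b + 2 * c * t - d / t ^ 2) t := by
  have h := (((hasDerivAt_const t a).add ((hasDerivAt_id' t).const_mul b)).add
    (((hasDerivAt_id' t).pow 2).const_mul c)).add ((hasDerivAt_const t d).div (hasDerivAt_id' t) ht)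
  exact h.congr_deriv (by field_simp; ring)

theorem mul_deriv_comp_log {f : ℝ → ℝ} {f' x : ℝ} (hx : x ≠ 0) (hf : HasDerivAt f f' (log x)) :
    x * deriv (fun y => f (log y)) x = f' := by
  change x * deriv (f ∘ log) x = f'
  rw [(hf.comp x (hasDerivAt_log hx)).deriv]
  field_simp

theorem mul_deriv_eq_of_eq_quadLaurent_log {F : ℝ → ℝ} {a b c d x : ℝ} (hx : x ≠ 0)
    (hl : log x ≠ 0) (hF : ∀ y, F y = quadLaurent a b c d (log y)) :
    x * deriv F x = b + 2 * c * log x - d / log x ^ 2 := by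
  rw [funext hF]
  exact mul_deriv_comp_log hx (hasDerivAt_quadLaurent a b c d hl)

/-- The explicit functions (43) of the paper, with `A = B = C = 0`
(nilpotent `P₁`), solve the central system (42) on `(1,∞)`, where `F′` denotes
the Euler derivative `x·(dF/dx)`. -/
theorem stmt_3 (α β γ δ μ : ℝ) (A B C D E G L M N : ℝ → ℝ)
    (hA : A = fun _ => (0:ℝ)) (hB : B = fun _ => (0:ℝ)) (hC : C = fun _ => (0:ℝ))
    (hD : D = fun x => β / Real.log x)
    (hE : E = fun x => -β + γ / Real.log x)
    (hG : G = fun x => 1 / Real.log x)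
    (hL : L = fun x => α * β + 2 * β ^ 2 + δ * Real.log x - β * γ / Real.log x)
    (hM : M = fun x => α * γ + 3 * β * γ + μ * Real.log x - δ * (Real.log x) ^ 2
      - γ ^ 2 / Real.log x)
    (hN : N = fun x => α + β - γ / Real.log x) :
    ∀ x, 1 < x →
      x * deriv D x = D x * B x + L x * C x - A x * E x - D x * G x ∧
      x * deriv L x = D x * E x + L x * G x - A x * M x - D x * N x ∧
      x * deriv E x = M x * C x - E x * G x - D x ∧
      x * deriv M x = E x ^ 2 + M x * G x - B x * M x - E x * N x - L x ∧
      x * deriv G x = G x * B x + N x * C x - C x * E x - G x ^ 2 + A x ∧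
      x * deriv N x = G x * E x - C x * M x + D x := by
  intro x hx
  have hx0 : x ≠ 0 := by positivity
  have hl : log x ≠ 0 := (log_pos hx).ne'
  rw [mul_deriv_eq_of_eq_quadLaurent_log (a := 0) (b := 0) (c := 0) (d := β) hx0 hl
      (fun y => by simp [hD, quadLaurent]),
    mul_deriv_eq_of_eq_quadLaurent_log (a := α * β + 2 * β ^ 2) (b := δ) (c := 0) (d := -(β * γ))
      hx0 hl (fun y => by simp only [hL, quadLaurent]; ring),
    mul_deriv_eq_of_eq_quadLaurent_log (a := -β) (b := 0) (c := 0) (d := γ) hx0 hl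
      (fun y => by simp [hE, quadLaurent]),
    mul_deriv_eq_of_eq_quadLaurent_log (a := α * γ + 3 * β * γ) (b := μ) (c := -δ) (d := -γ ^ 2)
      hx0 hl (fun y => by simp only [hM, quadLaurent]; ring),
    mul_deriv_eq_of_eq_quadLaurent_log (a := 0) (b := 0) (c := 0) (d := 1) hx0 hl
      (fun y => by simp [hG, quadLaurent]),
    mul_deriv_eq_of_eq_quadLaurent_log (a := α + β) (b := 0) (c := 0) (d := -γ) hx0 hl
      (fun y => by simp only [hN, quadLaurent]; ring)]
  subst hA hB hC hD hE hG hL hM hN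
  refine ⟨?_, ?_, ?_, ?_, ?_, ?_⟩ <;> field_simp <;> ring
end

section
/- Let α, β, γ be real constants and let E : (0,∞) → ℝ be such that E and F := (x ↦ x·E′(x)) are differentiable and satisfy x·F′(x) − 6E(x)² + 4αE(x) + β = 0 on (0,∞). Define A = 2E − α, B = 0, C = 1, D = γ − F/2, G = 0, L = −E² + αE + β/2, M = γ + F/2, N = α − E. Then these functions satisfy the system D′ = DB + LC − AE − DG, L′ = DE + LG − AM − DN, E′ = MC − EG − D, M′ = E² + MG − BM − EN − L, G′ = GB + NC − CE − G² + A, N′ = GE − CM + D on (0,∞), where H′ denotes x·(dH/dx). -/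
/-- If `E` solves the Boussinesq-type reduction
`E″ − 6E² + 4αE + β = 0` (with `E′ = x·dE/dx`, `E″ = x·d/dx(x·dE/dx)`, i.e.
`F = x·E′` and `x·F′ − 6E² + 4αE + β = 0`) on `(0,∞)`, then the structure
constants (46) of the paper solve the central system (42) on `(0,∞)`, where
`H′` denotes `x·(dH/dx)`. -/
theorem stmt_4 (α β γ : ℝ) (E F : ℝ → ℝ)
    (hF : F = fun x => x * deriv E x)
    (hEdiff : ∀ x, 0 < x → DifferentiableAt ℝ E x)
    (hFdiff : ∀ x, 0 < x → DifferentiableAt ℝ F x)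
    (hODE : ∀ x, 0 < x → x * deriv F x - 6 * E x ^ 2 + 4 * α * E x + β = 0)
    (A B C D G L M N : ℝ → ℝ)
    (hA : A = fun x => 2 * E x - α)
    (hB : B = fun _ => (0:ℝ))
    (hC : C = fun _ => (1:ℝ))
    (hD : D = fun x => γ - F x / 2)
    (hG : G = fun _ => (0:ℝ))
    (hL : L = fun x => -(E x) ^ 2 + α * E x + β / 2)
    (hM : M = fun x => γ + F x / 2)
    (hN : N = fun x => α - E x) :
    ∀ x, 0 < x →
      x * deriv D x = D x * B x + L x * C x - A x * E x - D x * G x ∧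
      x * deriv L x = D x * E x + L x * G x - A x * M x - D x * N x ∧
      x * deriv E x = M x * C x - E x * G x - D x ∧
      x * deriv M x = E x ^ 2 + M x * G x - B x * M x - E x * N x - L x ∧
      x * deriv G x = G x * B x + N x * C x - C x * E x - G x ^ 2 + A x ∧
      x * deriv N x = G x * E x - C x * M x + D x := by

  subst hA hB hC hD hG hL hM hN
  intro x hx
  set e := deriv E x with he
  set f := deriv F x with hfd
  have hEx : HasDerivAt E e x := (hEdiff x hx).hasDerivAt
  have hFx : HasDerivAt F f x := (hFdiff x hx).hasDerivAt
  have hFval : F x = x * e := by rw [hF]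
  have hode : x * f - 6 * E x ^ 2 + 4 * α * E x + β = 0 := hODE x hx
  have hDd : deriv (fun x => γ - F x / 2) x = -(f / 2) := by
    have : HasDerivAt (fun x => γ - F x / 2) (0 - f / 2) x :=
      (hasDerivAt_const x γ).sub (hFx.div_const 2)
    simpa using this.deriv
  have hLd : deriv (fun x => -(E x) ^ 2 + α * E x + β / 2) x
      = -(2 * E x ^ 1 * e) + α * e := by
    have : HasDerivAt (fun x => -(E x) ^ 2 + α * E x + β / 2)
        (-(2 * E x ^ 1 * e) + α * e + 0) x :=
      (((hEx.pow 2).neg.add (hEx.const_mul α)).add (hasDerivAt_const x (β / 2)))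
    simpa using this.deriv
  have hMd : deriv (fun x => γ + F x / 2) x = 0 + f / 2 := by
    exact ((hasDerivAt_const x γ).add (hFx.div_const 2)).deriv
  have hNd : deriv (fun x => α - E x) x = 0 - e := by
    exact ((hasDerivAt_const x α).sub hEx).deriv
  have hGd : deriv (fun _ : ℝ => (0:ℝ)) x = 0 := deriv_const x 0
  refine ⟨?_, ?_, ?_, ?_, ?_, ?_⟩ <;>
    simp only [hDd, hLd, hMd, hNd, hGd, hFval]
  · linear_combination (-(1:ℝ)/2) * hode
  · ring
  · ring
  · linear_combination ((1:ℝ)/2) * hode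
  · ring
  · ring
end

section
/- Let B, C, E, G, M, N : (0,∞) → ℝ with E, G, M, N differentiable, satisfying E′ = MC − EG, M′ = E² + MG − BM − EN, G′ = GB + NC − CE − G², N′ = GE − CM on (0,∞), where F′ denotes x·(dF/dx). Then the three functions E + N, E² + N² + 2MG, and EN − GM are constant on (0,∞). In particular the characteristic polynomial, and hence the eigenvalues, of the matrix C₂ = [[E,M],[G,N]] are invariant. -/
/-!
In Lax form `x·C₂′ = [C₂, C₁]`, so `x·(tr C₂)′ = tr [C₂, C₁] = 0` and `x·(det C₂)′ = 0`:
the trace `E + N` and the determinant `EN − GM` are first integrals. The remaining invariant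
is `tr C₂² = (tr C₂)² − 2 det C₂ = E² + N² + 2MG`, and a `2 × 2` characteristic polynomial
is `X² − (tr) X + det`.
-/

def IsCentralSystem (B C E G M N : ℝ → ℝ) : Prop :=
  ∀ x, 0 < x →
    x * deriv E x = M x * C x - E x * G x ∧
    x * deriv M x = E x ^ 2 + M x * G x - B x * M x - E x * N x ∧
    x * deriv G x = G x * B x + N x * C x - C x * E x - G x ^ 2 ∧
    x * deriv N x = G x * E x - C x * M x

lemma eq_of_mul_deriv_eq_zero_of_pos {f : ℝ → ℝ}
    (hf : ∀ x, 0 < x → DifferentiableAt ℝ f x) (hf' : ∀ x, 0 < x → x * deriv f x = 0)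
    {x y : ℝ} (hx : 0 < x) (hy : 0 < y) : f x = f y :=
  isOpen_Ioi.is_const_of_deriv_eq_zero isPreconnected_Ioi
    (fun z hz => (hf z hz).differentiableWithinAt)
    (fun z hz => (mul_eq_zero.mp (hf' z hz)).resolve_left (ne_of_gt hz)) hx hy

section CentralSystem

variable {B C E G M N : ℝ → ℝ}

lemma IsCentralSystem.trace_eq (hsys : IsCentralSystem B C E G M N)
    (hE : ∀ x, 0 < x → DifferentiableAt ℝ E x) (hN : ∀ x, 0 < x → DifferentiableAt ℝ N x)
    {x y : ℝ} (hx : 0 < x) (hy : 0 < y) : E x + N x = E y + N y := by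
  refine eq_of_mul_deriv_eq_zero_of_pos (f := fun z => E z + N z)
    (fun z hz => (hE z hz).add (hN z hz)) (fun z hz => ?_) hx hy
  obtain ⟨hE', -, -, hN'⟩ := hsys z hz
  rw [deriv_fun_add (hE z hz) (hN z hz)]
  linear_combination hE' + hN'

lemma IsCentralSystem.det_eq (hsys : IsCentralSystem B C E G M N)
    (hE : ∀ x, 0 < x → DifferentiableAt ℝ E x) (hG : ∀ x, 0 < x → DifferentiableAt ℝ G x)
    (hM : ∀ x, 0 < x → DifferentiableAt ℝ M x) (hN : ∀ x, 0 < x → DifferentiableAt ℝ N x)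
    {x y : ℝ} (hx : 0 < x) (hy : 0 < y) :
    E x * N x - G x * M x = E y * N y - G y * M y := by
  refine eq_of_mul_deriv_eq_zero_of_pos (f := fun z => E z * N z - G z * M z)
    (fun z hz => ((hE z hz).mul (hN z hz)).sub ((hG z hz).mul (hM z hz)))
    (fun z hz => ?_) hx hy
  obtain ⟨hE', hM', hG', hN'⟩ := hsys z hz
  rw [deriv_fun_sub ((hE z hz).fun_mul (hN z hz)) ((hG z hz).fun_mul (hM z hz)),
    deriv_fun_mul (hE z hz) (hN z hz), deriv_fun_mul (hG z hz) (hM z hz)]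
  linear_combination N z * hE' + E z * hN' - M z * hG' - G z * hM'

end CentralSystem

/-- For the central system (49) of the two-dimensional algebra,
`E′ = MC − EG, M′ = E² + MG − BM − EN, G′ = GB + NC − CE − G², N′ = GE − CM`
(with `F′ = x·dF/dx` on `(0,∞)`), the quantities `E + N`, `E² + N² + 2MG`
and `EN − GM` are constant; in particular the characteristic polynomial of
`C₂ = [[E,M],[G,N]]` is invariant. -/
theorem stmt_6 (B C E G M N : ℝ → ℝ)
    (hE : ∀ x, 0 < x → DifferentiableAt ℝ E x)
    (hG : ∀ x, 0 < x → DifferentiableAt ℝ G x)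
    (hM : ∀ x, 0 < x → DifferentiableAt ℝ M x)
    (hN : ∀ x, 0 < x → DifferentiableAt ℝ N x)
    (hsys : ∀ x, 0 < x →
      x * deriv E x = M x * C x - E x * G x ∧
      x * deriv M x = E x ^ 2 + M x * G x - B x * M x - E x * N x ∧
      x * deriv G x = G x * B x + N x * C x - C x * E x - G x ^ 2 ∧
      x * deriv N x = G x * E x - C x * M x) :
    ∀ x, 0 < x → ∀ y, 0 < y →
      E x + N x = E y + N y ∧
      E x ^ 2 + N x ^ 2 + 2 * M x * G x = E y ^ 2 + N y ^ 2 + 2 * M y * G y ∧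
      E x * N x - G x * M x = E y * N y - G y * M y ∧
      (!![E x, M x; G x, N x]).charpoly = (!![E y, M y; G y, N y]).charpoly := by
  intro x hx y hy
  have htrace := IsCentralSystem.trace_eq hsys hE hN hx hy
  have hdet := IsCentralSystem.det_eq hsys hE hG hM hN hx hy
  refine ⟨htrace, ?_, hdet, ?_⟩
  · linear_combination (E x + N x + E y + N y) * htrace - 2 * hdet
  · rw [Matrix.charpoly_fin_two, Matrix.charpoly_fin_two, Matrix.trace_fin_two_of,
      Matrix.trace_fin_two_of, Matrix.det_fin_two_of, Matrix.det_fin_two_of, htrace,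
      show E x * N x - M x * G x = E y * N y - M y * G y by linear_combination hdet]
end

section
/- Let α, β, γ be real constants, and on (1,∞) define B = 0, C = 0, E(x) = β/ln x, G(x) = 1/ln x, M(x) = γ·ln x − β²/ln x + αβ, N(x) = −β/ln x + α. Then these functions satisfy E′ = MC − EG, M′ = E² + MG − BM − EN, G′ = GB + NC − CE − G², N′ = GE − CM on (1,∞), where F′ denotes x·(dF/dx). Moreover E + N = α and E² + N² + 2MG = 2γ + α² identically. -/
/-- The explicit functions (51) of the paper, with `B = C = 0`
(nilpotent `P₁`), solve the central system (49) on `(1,∞)` (where `F′` denotes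
`x·dF/dx`), and the first integrals take the values `E + N = α` and
`E² + N² + 2MG = 2γ + α²`. -/
theorem stmt_7 (α β γ : ℝ) (B C E G M N : ℝ → ℝ)
    (hB : B = fun _ => (0:ℝ)) (hC : C = fun _ => (0:ℝ))
    (hE : E = fun x => β / Real.log x)
    (hG : G = fun x => 1 / Real.log x)
    (hM : M = fun x => γ * Real.log x - β ^ 2 / Real.log x + α * β)
    (hN : N = fun x => -β / Real.log x + α) :
    ∀ x, 1 < x →
      (x * deriv E x = M x * C x - E x * G x ∧
       x * deriv M x = E x ^ 2 + M x * G x - B x * M x - E x * N x ∧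
       x * deriv G x = G x * B x + N x * C x - C x * E x - G x ^ 2 ∧
       x * deriv N x = G x * E x - C x * M x) ∧
      E x + N x = α ∧
      E x ^ 2 + N x ^ 2 + 2 * M x * G x = 2 * γ + α ^ 2 := by
  intro x hx
  have hx0 : x ≠ 0 := by positivity
  have hL : Real.log x ≠ 0 := ne_of_gt (Real.log_pos hx)
  have hlog : HasDerivAt Real.log (1 / x) x := by
    simpa using Real.hasDerivAt_log hx0
  have hEd : HasDerivAt (fun x => β / Real.log x)
      ((0 * Real.log x - β * (1 / x)) / Real.log x ^ 2) x :=
    (hasDerivAt_const x β).div hlog hL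
  have hGd : HasDerivAt (fun x => 1 / Real.log x)
      ((0 * Real.log x - 1 * (1 / x)) / Real.log x ^ 2) x :=
    (hasDerivAt_const x (1:ℝ)).div hlog hL
  have hMd : HasDerivAt (fun x => γ * Real.log x - β ^ 2 / Real.log x + α * β)
      (γ * (1 / x) - (0 * Real.log x - β ^ 2 * (1 / x)) / Real.log x ^ 2 + 0) x :=
    (((hlog.const_mul γ).sub ((hasDerivAt_const x (β ^ 2)).div hlog hL)).add
      (hasDerivAt_const x (α * β)))
  have hNd : HasDerivAt (fun x => -β / Real.log x + α)
      ((0 * Real.log x - -β * (1 / x)) / Real.log x ^ 2 + 0) x :=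
    ((hasDerivAt_const x (-β)).div hlog hL).add (hasDerivAt_const x α)
  subst hB hC hE hG hM hN
  rw [hEd.deriv, hGd.deriv, hMd.deriv, hNd.deriv]
  refine ⟨⟨?_, ?_, ?_, ?_⟩, ?_, ?_⟩ <;> field_simp <;> ring
end

section
/- Let α, γ, δ be real constants and β > 0, and on (0,∞) define B = 1, C = 0, E(x) = γ/(x+β), G(x) = x/(x+β), M(x) = δ + (αγ + βδ − γ²/β)/x + γ²/(β(x+β)), N(x) = −γ/(x+β) + α. Then these functions satisfy E′ = MC − EG, M′ = E² + MG − BM − EN, G′ = GB + NC − CE − G², N′ = GE − CM on (0,∞), where F′ denotes x·(dF/dx). Moreover E + N = α identically. -/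
theorem HasDerivAt.const_div {𝕜 : Type*} [NontriviallyNormedField 𝕜] {f : 𝕜 → 𝕜} {f' x : 𝕜}
    (c : 𝕜) (hf : HasDerivAt f f' x) (hx : f x ≠ 0) :
    HasDerivAt (fun y => c / f y) (-c * f' / f x ^ 2) x :=
  ((hasDerivAt_const x c).div hf hx).congr_deriv (by ring)

/-- The explicit functions (52) of the paper, with `B = 1, C = 0`,
solve the central system (49) on `(0,∞)` (where `F′` denotes `x·dF/dx`), and
the first integral takes the value `E + N = α`. -/
theorem stmt_8 (α γ δ : ℝ) (β : ℝ) (hβ : 0 < β) (B C E G M N : ℝ → ℝ)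
    (hB : B = fun _ => (1:ℝ)) (hC : C = fun _ => (0:ℝ))
    (hE : E = fun x => γ / (x + β))
    (hG : G = fun x => x / (x + β))
    (hM : M = fun x => δ + (α * γ + β * δ - γ ^ 2 / β) / x + γ ^ 2 / (β * (x + β)))
    (hN : N = fun x => -γ / (x + β) + α) :
    ∀ x, 0 < x →
      (x * deriv E x = M x * C x - E x * G x ∧
       x * deriv M x = E x ^ 2 + M x * G x - B x * M x - E x * N x ∧
       x * deriv G x = G x * B x + N x * C x - C x * E x - G x ^ 2 ∧
       x * deriv N x = G x * E x - C x * M x) ∧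
      E x + N x = α := by
  intro x hx
  subst hB hC hE hG hM hN
  have hx0 : x ≠ 0 := hx.ne'
  have hxβ : x + β ≠ 0 := by positivity
  have hβxβ : β * (x + β) ≠ 0 := by positivity
  have hshift : HasDerivAt (fun y => y + β) 1 x := (hasDerivAt_id' x).add_const β
  have hE : HasDerivAt (fun y => γ / (y + β)) (-γ / (x + β) ^ 2) x :=
    (hshift.const_div γ hxβ).congr_deriv (by ring)
  have hN : HasDerivAt (fun y => -γ / (y + β) + α) (γ / (x + β) ^ 2) x :=
    ((hshift.const_div (-γ) hxβ).add_const α).congr_deriv (by ring)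
  have hG : HasDerivAt (fun y => y / (y + β)) (β / (x + β) ^ 2) x :=
    ((hasDerivAt_id' x).div hshift hxβ).congr_deriv (by ring)
  have hM : HasDerivAt (fun y => δ + (α * γ + β * δ - γ ^ 2 / β) / y + γ ^ 2 / (β * (y + β)))
      (-(α * γ + β * δ - γ ^ 2 / β) / x ^ 2 - γ ^ 2 / (β * (x + β) ^ 2)) x :=
    (((hasDerivAt_const x δ).add ((hasDerivAt_id' x).const_div _ hx0)).add
      ((hshift.const_mul β).const_div (γ ^ 2) hβxβ)).congr_deriv (by field_simp; ring)
  rw [hE.deriv, hN.deriv, hG.deriv, hM.deriv]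
  refine ⟨⟨?_, ?_, ?_, ?_⟩, ?_⟩ <;> field_simp <;> ring
end

section
/- Let B : ℝ → ℝ be twice differentiable and let E, G, M, N : ℝ → ℝ be differentiable functions satisfying (with ′ the ordinary derivative) E′ = M − EG, M′ = E² + MG − BM − EN, G′ = GB + N − E − G², N′ = GE − M, together with the constraint N = −E. Then G is three times differentiable and satisfies G‴ + 2G²G′ + 4(G′)² + 2GG″ − 2G′Φ − GΦ′ = 0, where Φ = B′ + (1/2)B². -/
/-!
With `N = -E` the system closes on `(E, M, G)`, with `M′ = 2E² + MG - BM`, and the `G`-equation `G′ = GB - 2E - G²` can be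
differentiated twice along the flow. Substituting `E′` and `M′` expresses `G″` and `G‴` as
polynomials in `B, B′, B″, E, G, M`, and the claimed third-order equation is then a polynomial
identity in these free variables.
-/

namespace ReducedSystem

/-- `derivG₁`, `derivG₂`, `derivG₃` are `G′, G″, G‴` along the reduced system. -/
def derivG₁ (B E G : ℝ → ℝ) (t : ℝ) : ℝ :=
  G t * B t - 2 * E t - G t ^ 2

def derivG₂ (B B' E G M : ℝ → ℝ) (t : ℝ) : ℝ :=
  derivG₁ B E G t * B t + G t * B' t - 2 * (M t - E t * G t) - 2 * G t * derivG₁ B E G t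

def derivG₃ (B B' B'' E G M : ℝ → ℝ) (t : ℝ) : ℝ :=
  derivG₂ B B' E G M t * B t + derivG₁ B E G t * B' t
    + (derivG₁ B E G t * B' t + G t * B'' t)
    - 2 * ((2 * E t ^ 2 + M t * G t - B t * M t) - ((M t - E t * G t) * G t
      + E t * derivG₁ B E G t))
    - (2 * derivG₁ B E G t * derivG₁ B E G t + 2 * G t * derivG₂ B B' E G M t)

variable {B B' B'' E G M : ℝ → ℝ} {y : ℝ}

theorem hasDerivAt_derivG₁ (hB : HasDerivAt B (B' y) y)
    (hE : HasDerivAt E (M y - E y * G y) y) (hG : HasDerivAt G (derivG₁ B E G y) y) :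
    HasDerivAt (derivG₁ B E G) (derivG₂ B B' E G M y) y := by
  have h := ((hG.mul hB).sub (hE.const_mul 2)).sub (hG.pow 2)
  refine h.congr_deriv ?_
  simp only [derivG₂]
  ring

theorem hasDerivAt_derivG₂ (hB : HasDerivAt B (B' y) y) (hB' : HasDerivAt B' (B'' y) y)
    (hE : HasDerivAt E (M y - E y * G y) y)
    (hM : HasDerivAt M (2 * E y ^ 2 + M y * G y - B y * M y) y)
    (hG : HasDerivAt G (derivG₁ B E G y) y) :
    HasDerivAt (derivG₂ B B' E G M) (derivG₃ B B' B'' E G M y) y := by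
  have hG₁ := hasDerivAt_derivG₁ (M := M) hB hE hG
  exact ((((hG₁.mul hB).add (hG.mul hB')).sub ((hM.sub (hE.mul hG)).const_mul 2)).sub
    ((hG.const_mul 2).mul hG₁))

theorem derivG₃_add_eq_zero (t : ℝ) :
    derivG₃ B B' B'' E G M t + 2 * G t ^ 2 * derivG₁ B E G t + 4 * derivG₁ B E G t ^ 2
      + 2 * G t * derivG₂ B B' E G M t
      - 2 * derivG₁ B E G t * (B' t + (1/2) * B t ^ 2)
      - G t * (B'' t + B t * B' t) = 0 := by
  simp only [derivG₃, derivG₂, derivG₁]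
  ring

end ReducedSystem

open ReducedSystem in
theorem stmt_9_general (B E G M N : ℝ → ℝ)
    (hB : Differentiable ℝ B) (hB' : Differentiable ℝ (deriv B))
    (hE : Differentiable ℝ E) (hG : Differentiable ℝ G)
    (hM : Differentiable ℝ M)
    (hsys : ∀ y : ℝ,
      deriv E y = M y - E y * G y ∧
      deriv M y = E y ^ 2 + M y * G y - B y * M y - E y * N y ∧
      deriv G y = G y * B y + N y - E y - G y ^ 2 ∧
      deriv N y = G y * E y - M y)
    (hconstr : ∀ y : ℝ, N y = -E y) :
    Differentiable ℝ (deriv G) ∧ Differentiable ℝ (deriv (deriv G)) ∧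
    ∀ y : ℝ,
      deriv (deriv (deriv G)) y + 2 * G y ^ 2 * deriv G y + 4 * (deriv G y) ^ 2
        + 2 * G y * deriv (deriv G) y
        - 2 * deriv G y * (deriv B y + (1/2) * B y ^ 2)
        - G y * deriv (fun t => deriv B t + (1/2) * B t ^ 2) y = 0 := by
  have hB₁ y := (hB y).hasDerivAt
  have hB₂ y := (hB' y).hasDerivAt
  have hE₁ y : HasDerivAt E (M y - E y * G y) y := (hsys y).1 ▸ (hE y).hasDerivAt
  have hM₁ y : HasDerivAt M (2 * E y ^ 2 + M y * G y - B y * M y) y :=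
    (hM y).hasDerivAt.congr_deriv (by rw [(hsys y).2.1, hconstr]; ring)
  have hG₁ y : HasDerivAt G (derivG₁ B E G y) y :=
    (hG y).hasDerivAt.congr_deriv (by rw [(hsys y).2.2.1, hconstr, derivG₁]; ring)
  have hG₂ y := hasDerivAt_derivG₁ (M := M) (hB₁ y) (hE₁ y) (hG₁ y)
  have hG₃ y := hasDerivAt_derivG₂ (hB₁ y) (hB₂ y) (hE₁ y) (hM₁ y) (hG₁ y)
  have d₁ : deriv G = derivG₁ B E G := funext fun y => (hG₁ y).deriv
  have d₂ : deriv (deriv G) = derivG₂ B (deriv B) E G M := by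
    rw [d₁]; exact funext fun y => (hG₂ y).deriv
  have d₃ : deriv (deriv (deriv G)) = derivG₃ B (deriv B) (deriv (deriv B)) E G M := by
    rw [d₂]; exact funext fun y => (hG₃ y).deriv
  have dΦ y : deriv (fun t => deriv B t + (1/2) * B t ^ 2) y
      = deriv (deriv B) y + B y * deriv B y := by
    refine (((hB₂ y).add (((hB₁ y).pow 2).const_mul (1/2))).congr_deriv ?_).deriv
    ring
  refine ⟨d₁ ▸ fun y => (hG₂ y).differentiableAt, d₂ ▸ fun y => (hG₃ y).differentiableAt,
    fun y => ?_⟩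
  rw [d₃, d₂, d₁, dΦ]
  exact derivG₃_add_eq_zero y

/-- If `B` is twice differentiable, `E, G, M, N` are differentiable
and solve the system (49) with `C = 1` in the variable `y` (ordinary derivative),
together with the constraint `N = −E`, then `G` is three times differentiable and
satisfies `G‴ + 2G²G′ + 4(G′)² + 2GG″ − 2G′Φ − GΦ′ = 0` with `Φ = B′ + (1/2)B²`. -/
theorem stmt_9 (B E G M N : ℝ → ℝ)
    (hB : Differentiable ℝ B) (hB' : Differentiable ℝ (deriv B))
    (hE : Differentiable ℝ E) (hG : Differentiable ℝ G)
    (hM : Differentiable ℝ M) (hN : Differentiable ℝ N)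
    (hsys : ∀ y : ℝ,
      deriv E y = M y - E y * G y ∧
      deriv M y = E y ^ 2 + M y * G y - B y * M y - E y * N y ∧
      deriv G y = G y * B y + N y - E y - G y ^ 2 ∧
      deriv N y = G y * E y - M y)
    (hconstr : ∀ y : ℝ, N y = -E y) :
    Differentiable ℝ (deriv G) ∧ Differentiable ℝ (deriv (deriv G)) ∧
    ∀ y : ℝ,
      deriv (deriv (deriv G)) y + 2 * G y ^ 2 * deriv G y + 4 * (deriv G y) ^ 2
        + 2 * G y * deriv (deriv G) y
        - 2 * deriv G y * (deriv B y + (1/2) * B y ^ 2)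
        - G y * deriv (fun t => deriv B t + (1/2) * B t ^ 2) y = 0 :=
  stmt_9_general B E G M N hB hB' hE hG hM hsys hconstr
end

section
/- Let G : ℝ → ℝ be three times differentiable and Φ : ℝ → ℝ differentiable, satisfying G‴ + 2G²G′ + 4(G′)² + 2GG″ − 2G′Φ − GΦ′ = 0 on ℝ. Then the function y ↦ −(1/2)G⁴ + (1/2)(G′)² − 2G²G′ − GG″ + ΦG² is constant on ℝ. In particular, for Φ = 0 (the Chazy V equation G‴ + 2G²G′ + 4(G′)² + 2GG″ = 0) the quantity −(1/2)G⁴ + (1/2)(G′)² − 2G²G′ − GG″ is a first integral. -/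
/-!
Differentiating `F = −½G⁴ + ½(G′)² − 2G²G′ − GG″ + ΦG²` gives exactly `−G` times the left-hand
side of the equation, so `F′ = 0` and `F` is constant on `ℝ`.
-/

noncomputable def chazyVResidual (G Φ : ℝ → ℝ) (y : ℝ) : ℝ :=
  deriv (deriv (deriv G)) y + 2 * G y ^ 2 * deriv G y + 4 * (deriv G y) ^ 2
    + 2 * G y * deriv (deriv G) y - 2 * deriv G y * Φ y - G y * deriv Φ y

noncomputable def chazyVFirstIntegral (G Φ : ℝ → ℝ) (y : ℝ) : ℝ :=
  -(1/2) * G y ^ 4 + (1/2) * (deriv G y) ^ 2 - 2 * G y ^ 2 * deriv G y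
    - G y * deriv (deriv G) y + Φ y * G y ^ 2

theorem hasDerivAt_chazyVFirstIntegral {G Φ : ℝ → ℝ} {y : ℝ}
    (hG : DifferentiableAt ℝ G y) (hG' : DifferentiableAt ℝ (deriv G) y)
    (hG'' : DifferentiableAt ℝ (deriv (deriv G)) y) (hΦ : DifferentiableAt ℝ Φ y) :
    HasDerivAt (chazyVFirstIntegral G Φ) (-G y * chazyVResidual G Φ y) y := by
  have h1 := hG.hasDerivAt
  have h2 := hG'.hasDerivAt
  have h3 := hG''.hasDerivAt
  have h4 := hΦ.hasDerivAt
  have hF := (((((h1.pow 4).const_mul (-(1/2) : ℝ)).add ((h2.pow 2).const_mul (1/2 : ℝ))).sub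
    (((h1.pow 2).const_mul 2).mul h2)).sub (h1.mul h3)).add (h4.mul (h1.pow 2))
  refine hF.congr_deriv ?_
  push_cast [chazyVResidual, Pi.pow_apply]
  ring

theorem chazyVFirstIntegral_eq_of_residual_eq_zero {G Φ : ℝ → ℝ}
    (hG : Differentiable ℝ G) (hG' : Differentiable ℝ (deriv G))
    (hG'' : Differentiable ℝ (deriv (deriv G))) (hΦ : Differentiable ℝ Φ)
    (heq : ∀ y, chazyVResidual G Φ y = 0) (y z : ℝ) :
    chazyVFirstIntegral G Φ y = chazyVFirstIntegral G Φ z := by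
  have hF y := hasDerivAt_chazyVFirstIntegral (hG y) (hG' y) (hG'' y) (hΦ y)
  refine is_const_of_deriv_eq_zero (fun x => (hF x).differentiableAt) (fun x => ?_) y z
  rw [(hF x).deriv, heq x, mul_zero]

/-- For a three times differentiable `G` and differentiable `Φ`
satisfying `G‴ + 2G²G′ + 4(G′)² + 2GG″ − 2G′Φ − GΦ′ = 0` on `ℝ`, the quantity
`−(1/2)G⁴ + (1/2)(G′)² − 2G²G′ − GG″ + ΦG²` is constant; in particular for
`Φ = 0` (the Chazy V equation) the quantity
`−(1/2)G⁴ + (1/2)(G′)² − 2G²G′ − GG″` is a first integral. -/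
theorem stmt_10 (G Φ : ℝ → ℝ)
    (hG : Differentiable ℝ G) (hG' : Differentiable ℝ (deriv G))
    (hG'' : Differentiable ℝ (deriv (deriv G)))
    (hΦ : Differentiable ℝ Φ)
    (heq : ∀ y : ℝ,
      deriv (deriv (deriv G)) y + 2 * G y ^ 2 * deriv G y + 4 * (deriv G y) ^ 2
        + 2 * G y * deriv (deriv G) y - 2 * deriv G y * Φ y - G y * deriv Φ y = 0) :
    (∀ y z : ℝ,
      -(1/2) * G y ^ 4 + (1/2) * (deriv G y) ^ 2 - 2 * G y ^ 2 * deriv G y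
          - G y * deriv (deriv G) y + Φ y * G y ^ 2 =
      -(1/2) * G z ^ 4 + (1/2) * (deriv G z) ^ 2 - 2 * G z ^ 2 * deriv G z
          - G z * deriv (deriv G) z + Φ z * G z ^ 2) ∧
    ((∀ y : ℝ, Φ y = 0) → ∀ y z : ℝ,
      -(1/2) * G y ^ 4 + (1/2) * (deriv G y) ^ 2 - 2 * G y ^ 2 * deriv G y
          - G y * deriv (deriv G) y =
      -(1/2) * G z ^ 4 + (1/2) * (deriv G z) ^ 2 - 2 * G z ^ 2 * deriv G z
          - G z * deriv (deriv G) z) := by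
  have hconst := chazyVFirstIntegral_eq_of_residual_eq_zero hG hG' hG'' hΦ heq
  refine ⟨hconst, fun hΦ0 y z => ?_⟩
  simpa [chazyVFirstIntegral, hΦ0] using hconst y z
end

section
/- Let C₁, C₂ : ℝ → M₃(ℝ) with C₁ differentiable and C₁(x) invertible for every x, satisfying C₁(x)·C₁′(x) = C₁(x)C₂(x) − C₂(x)C₁(x) for all x. Then the functions x ↦ tr C₁(x), x ↦ tr(C₁(x)²), x ↦ tr(C₁(x)³), and x ↦ det C₁(x) are constant. -/
/-! The derivative of `tr (C₁ ^ (k + 1))` is `(k + 1) tr (C₁ ^ k C₁')`, and the Lax equation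
gives `C₁' = C₁⁻¹ [C₁, C₂]`, so `C₁ ^ k C₁'` is the commutator `[C₁, C₂]` multiplied on the left
by `C₁ ^ k C₁⁻¹`, which commutes with `C₁`; such a product is traceless. Hence all power traces
of `C₁` are constant, and in dimension three so is `det C₁ = (tr³ - 3 tr tr₂ + 2 tr₃) / 6`. -/

namespace Matrix

variable {n : Type*} [Fintype n]

theorem trace_mul_commutator_eq_zero_of_commute {R : Type*} [CommRing R] {X A : Matrix n n R}
    (B : Matrix n n R) (h : Commute X A) : trace (X * (A * B - B * A)) = 0 := by
  rw [mul_sub, trace_sub, ← mul_assoc, ← mul_assoc, h.eq, mul_assoc, trace_mul_comm A, sub_self]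

theorem trace_pow_mul_eq_zero_of_mul_eq_commutator {R : Type*} [CommRing R] [DecidableEq n]
    {A A' B : Matrix n n R} (hA : IsUnit A) (hLax : A * A' = A * B - B * A) (k : ℕ) :
    trace (A ^ k * A') = 0 := by
  obtain ⟨u, rfl⟩ := hA
  have hcomm : Commute (↑u ^ k * Units.val u⁻¹ : Matrix n n R) u :=
    ((Commute.refl _).pow_left k).mul_left (Commute.refl (u : Matrix n n R)).units_inv_left
  calc trace (↑u ^ k * A') = trace ((↑u ^ k * Units.val u⁻¹) * (↑u * A')) := by
        rw [mul_assoc, ← mul_assoc _ (u : Matrix n n R), Units.inv_mul, one_mul]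
    _ = 0 := by rw [hLax]; exact trace_mul_commutator_eq_zero_of_commute B hcomm

theorem six_mul_det_fin_three {R : Type*} [CommRing R] (A : Matrix (Fin 3) (Fin 3) R) :
    6 * A.det = A.trace ^ 3 - 3 * A.trace * (A ^ 2).trace + 2 * (A ^ 3).trace := by
  simp only [det_fin_three, trace_fin_three, pow_succ, pow_zero, one_mul, mul_apply,
    Fin.sum_univ_three]
  ring

/- Differentiability of a matrix-valued function only depends on the topology of matrices;
the `L∞` operator norm is chosen because it makes `Matrix n n 𝕜` a normed `𝕜`-algebra. -/
attribute [local instance] Matrix.linftyOpNormedRing Matrix.linftyOpNormedAlgebra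

section NontriviallyNormedField

variable {𝕜 : Type*} [NontriviallyNormedField 𝕜]

theorem hasDerivAt_of_hasDerivAt_apply {C : 𝕜 → Matrix n n 𝕜} {C' : Matrix n n 𝕜} {x : 𝕜}
    (h : ∀ i j, HasDerivAt (fun t => C t i j) (C' i j) x) : HasDerivAt C C' x :=
  hasDerivAt_pi.2 fun i => hasDerivAt_pi.2 fun j => h i j

theorem _root_.HasDerivAt.matrix_trace {C : 𝕜 → Matrix n n 𝕜} {C' : Matrix n n 𝕜} {x : 𝕜}
    (h : HasDerivAt C C' x) : HasDerivAt (fun t => trace (C t)) (trace C') x := by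
  simpa only [trace, diag] using
    HasDerivAt.fun_sum fun i _ => hasDerivAt_pi.1 (hasDerivAt_pi.1 h i) i

theorem hasDerivAt_trace_pow_succ [DecidableEq n] {C : 𝕜 → Matrix n n 𝕜} {C' : Matrix n n 𝕜}
    {x : 𝕜} (h : HasDerivAt C C' x) (k : ℕ) :
    HasDerivAt (fun t => trace (C t ^ (k + 1))) ((k + 1) * trace (C x ^ k * C')) x := by
  convert (h.fun_pow' (k + 1)).matrix_trace using 1
  simp only [trace_sum, Nat.pred_succ]
  rw [Finset.sum_congr rfl fun i hi => ?_, Finset.sum_const, Finset.card_range, nsmul_eq_mul,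
    Nat.cast_succ]
  rw [trace_mul_comm, ← mul_assoc, ← pow_add, Nat.add_sub_cancel' (Finset.mem_range_succ_iff.1 hi)]

end NontriviallyNormedField

theorem trace_pow_eq_of_mul_deriv_eq_commutator [DecidableEq n] {𝕜 : Type*} [RCLike 𝕜]
    {C C' B : 𝕜 → Matrix n n 𝕜} (hC : ∀ x, HasDerivAt C (C' x) x) (hinv : ∀ x, IsUnit (C x))
    (hLax : ∀ x, C x * C' x = C x * B x - B x * C x) (k : ℕ) (x y : 𝕜) :
    trace (C x ^ k) = trace (C y ^ k) := by
  cases k with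
  | zero => simp
  | succ k =>
    have hzero : ∀ t, HasDerivAt (fun t => trace (C t ^ (k + 1))) 0 t := fun t => by
      simpa [trace_pow_mul_eq_zero_of_mul_eq_commutator (hinv t) (hLax t)] using
        hasDerivAt_trace_pow_succ (hC t) k
    exact is_const_of_deriv_eq_zero (fun t => (hzero t).differentiableAt)
      (fun t => (hzero t).deriv) x y

end Matrix

open Matrix in
/-- For `C₁, C₂ : ℝ → M₃(ℝ)` with `C₁` differentiable (entrywise
derivative `C₁'`) and `C₁(x)` invertible for all `x`, satisfying
`C₁(x)·C₁′(x) = C₁(x)C₂(x) − C₂(x)C₁(x)`, the functions `tr C₁`, `tr C₁²`,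
`tr C₁³` and `det C₁` are constant. -/
theorem stmt_13 (C₁ C₂ C₁' : ℝ → Matrix (Fin 3) (Fin 3) ℝ)
    (hderiv : ∀ x : ℝ, ∀ i j, HasDerivAt (fun t => C₁ t i j) (C₁' x i j) x)
    (hinv : ∀ x : ℝ, IsUnit (C₁ x))
    (hLax : ∀ x : ℝ, C₁ x * C₁' x = C₁ x * C₂ x - C₂ x * C₁ x) :
    ∀ x y : ℝ,
      (C₁ x).trace = (C₁ y).trace ∧
      ((C₁ x) ^ 2).trace = ((C₁ y) ^ 2).trace ∧
      ((C₁ x) ^ 3).trace = ((C₁ y) ^ 3).trace ∧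
      (C₁ x).det = (C₁ y).det := by
  intro x y
  have htr (k : ℕ) : (C₁ x ^ k).trace = (C₁ y ^ k).trace :=
    trace_pow_eq_of_mul_deriv_eq_commutator
      (fun t => hasDerivAt_of_hasDerivAt_apply (hderiv t)) hinv hLax k x y
  have htr₁ : (C₁ x).trace = (C₁ y).trace := by simpa using htr 1
  refine ⟨htr₁, htr 2, htr 3, ?_⟩
  have h6 : 6 * (C₁ x).det = 6 * (C₁ y).det := by
    rw [six_mul_det_fin_three, six_mul_det_fin_three, htr₁, htr 2, htr 3]
  exact mul_left_cancel₀ (by norm_num) h6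
end

section
/- Let B, E, C : ℝ → ℝ be continuously differentiable functions satisfying B′ = (1+C)E, E′ = −BE, C′ = −(2+C)B on ℝ, and let α ∈ ℝ be such that C(0) = αE(0) − 2 and B(0)² = −1 − αE(0)² + 2E(0). Then for all y ∈ ℝ: C(y) = αE(y) − 2, B(y)² = −1 − αE(y)² + 2E(y), and (E′(y))² + αE(y)⁴ − 2E(y)³ + E(y)² = 0. -/
/-!
`C - αE + 2` solves the linear equation `u' = -B u` and vanishes at `0`, so the integrating factor
`exp (-∫ B)` forces it to vanish identically. Once `C = αE - 2`, the quantity `B² + αE² - 2E` is a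
first integral of the system, and `E' = -BE` turns `B² = -1 - αE² + 2E` into the quartic equation
for `E`.
-/

theorem eq_zero_of_hasDerivAt_mul_self {g u : ℝ → ℝ} (hg : Continuous g)
    (hu : ∀ y, HasDerivAt u (g y * u y) y) {a : ℝ} (ha : u a = 0) (y : ℝ) : u y = 0 := by
  set w : ℝ → ℝ := fun t => u t * Real.exp (-∫ s in a..t, g s)
  have hw : ∀ t, HasDerivAt w 0 t := by
    intro t
    have hexp := ((hg.integral_hasStrictDerivAt a t).hasDerivAt.neg).exp
    exact ((hu t).mul hexp).congr_deriv (by ring)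
  have hw_const : w y = w a :=
    is_const_of_deriv_eq_zero (fun t => (hw t).differentiableAt) (fun t => (hw t).deriv) y a
  simpa [w, ha, Real.exp_ne_zero] using hw_const

section System

variable {B E C : ℝ → ℝ} {α : ℝ}

theorem C_eq_of_hasDerivAt (hBc : Continuous B) (hE : ∀ y, HasDerivAt E (-(B y) * E y) y)
    (hC : ∀ y, HasDerivAt C (-(2 + C y) * B y) y) (hC0 : C 0 = α * E 0 - 2) (y : ℝ) :
    C y = α * E y - 2 := by
  have hu : ∀ t, HasDerivAt (fun t => C t - α * E t + 2)
      (-B t * (C t - α * E t + 2)) t := by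
    intro t
    exact (((hC t).sub ((hE t).const_mul α)).add_const 2).congr_deriv (by ring)
  linarith [eq_zero_of_hasDerivAt_mul_self hBc.neg hu (a := 0) (by linarith) y]

theorem B_sq_eq_of_hasDerivAt (hB : ∀ y, HasDerivAt B ((1 + C y) * E y) y)
    (hE : ∀ y, HasDerivAt E (-(B y) * E y) y) (hCE : ∀ y, C y = α * E y - 2)
    (hB0 : B 0 ^ 2 = -1 - α * E 0 ^ 2 + 2 * E 0) (y : ℝ) :
    B y ^ 2 = -1 - α * E y ^ 2 + 2 * E y := by
  set F : ℝ → ℝ := fun t => B t ^ 2 + α * E t ^ 2 - 2 * E t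
  have hF : ∀ t, HasDerivAt F 0 t := by
    intro t
    refine ((((hB t).pow 2).add (((hE t).pow 2).const_mul α)).sub
      ((hE t).const_mul 2)).congr_deriv ?_
    rw [hCE t]
    push_cast
    ring
  have hF_const : F y = F 0 :=
    is_const_of_deriv_eq_zero (fun t => (hF t).differentiableAt) (fun t => (hF t).deriv) y 0
  simp only [F] at hF_const
  linarith

end System

/-- For continuously differentiable `B, E, C : ℝ → ℝ` solving
`B′ = (1+C)E, E′ = −BE, C′ = −(2+C)B` on `ℝ`, with `C(0) = αE(0) − 2` and
`B(0)² = −1 − αE(0)² + 2E(0)`, the relations `C = αE − 2`,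
`B² = −1 − αE² + 2E` and `(E′)² + αE⁴ − 2E³ + E² = 0` hold on all of `ℝ`. -/
theorem stmt_15 (B E C : ℝ → ℝ) (α : ℝ)
    (hB : ContDiff ℝ 1 B) (hE : ContDiff ℝ 1 E) (hC : ContDiff ℝ 1 C)
    (hsys : ∀ y : ℝ,
      deriv B y = (1 + C y) * E y ∧
      deriv E y = -(B y) * E y ∧
      deriv C y = -(2 + C y) * B y)
    (hC0 : C 0 = α * E 0 - 2)
    (hB0 : B 0 ^ 2 = -1 - α * E 0 ^ 2 + 2 * E 0) :
    ∀ y : ℝ,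
      C y = α * E y - 2 ∧
      B y ^ 2 = -1 - α * E y ^ 2 + 2 * E y ∧
      (deriv E y) ^ 2 + α * E y ^ 4 - 2 * E y ^ 3 + E y ^ 2 = 0 := by
  have hB' : ∀ y, HasDerivAt B ((1 + C y) * E y) y := fun y =>
    (hsys y).1 ▸ ((hB.differentiable one_ne_zero) y).hasDerivAt
  have hE' : ∀ y, HasDerivAt E (-(B y) * E y) y := fun y =>
    (hsys y).2.1 ▸ ((hE.differentiable one_ne_zero) y).hasDerivAt
  have hC' : ∀ y, HasDerivAt C (-(2 + C y) * B y) y := fun y =>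
    (hsys y).2.2 ▸ ((hC.differentiable one_ne_zero) y).hasDerivAt
  have hCE := C_eq_of_hasDerivAt hB.continuous hE' hC' hC0
  have hBE := B_sq_eq_of_hasDerivAt hB' hE' hCE hB0
  intro y
  refine ⟨hCE y, hBE y, ?_⟩
  rw [(hsys y).2.1]
  linear_combination (E y ^ 2) * hBE y
end

section
/- Let C₁, C₂ : ℤ → M₃(ℝ) with C₁(n) invertible for every n, satisfying C₁(n)·C₂(n+1) = C₂(n)·C₁(n+1) for all n ∈ ℤ. Then the matrix U(n) := C₂(n)·C₁(n)⁻¹ satisfies U(n+1) = C₁(n)⁻¹U(n)C₁(n), and consequently for every k ≥ 1 and every n, tr(U(n+1)ᵏ) = tr(U(n)ᵏ). -/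
/-- For `C₁, C₂ : ℤ → M₃(ℝ)` with each `C₁(n)` invertible,
satisfying `C₁(n)·C₂(n+1) = C₂(n)·C₁(n+1)`, the matrix `U(n) = C₂(n)·C₁(n)⁻¹`
evolves by conjugation, `U(n+1) = C₁(n)⁻¹ U(n) C₁(n)`, and consequently the
traces of all powers of `U` are invariant under the shift. -/
theorem stmt_16 (C₁ C₂ : ℤ → Matrix (Fin 3) (Fin 3) ℝ)
    (hinv : ∀ n : ℤ, IsUnit (C₁ n))
    (hLax : ∀ n : ℤ, C₁ n * C₂ (n + 1) = C₂ n * C₁ (n + 1))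
    (U : ℤ → Matrix (Fin 3) (Fin 3) ℝ)
    (hU : U = fun n => C₂ n * (C₁ n)⁻¹) :
    ∀ n : ℤ,
      U (n + 1) = (C₁ n)⁻¹ * U n * C₁ n ∧
      (∀ k : ℕ, 1 ≤ k → ((U (n + 1)) ^ k).trace = ((U n) ^ k).trace) := by
  have hd : ∀ m, IsUnit (C₁ m).det := fun m => (Matrix.isUnit_iff_isUnit_det _).1 (hinv m)
  intro n
  have h1 : U (n + 1) = (C₁ n)⁻¹ * U n * C₁ n := by
    subst hU
    simp only
    have h2 : C₂ (n + 1) = (C₁ n)⁻¹ * (C₂ n * C₁ (n + 1)) := by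
      rw [← hLax n, ← Matrix.mul_assoc, Matrix.nonsing_inv_mul _ (hd n), Matrix.one_mul]
    rw [h2, Matrix.mul_assoc, Matrix.mul_assoc, Matrix.mul_nonsing_inv _ (hd (n + 1)),
      Matrix.mul_one, Matrix.mul_assoc, Matrix.mul_assoc,
      Matrix.nonsing_inv_mul _ (hd n), Matrix.mul_one]
  refine ⟨h1, fun k _ => ?_⟩
  have hpow : ∀ m : ℕ, (U (n + 1)) ^ m = (C₁ n)⁻¹ * (U n) ^ m * C₁ n := by
    intro m
    induction m with
    | zero => simp [Matrix.nonsing_inv_mul _ (hd n)]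
    | succ m ih =>
        rw [pow_succ, pow_succ, ih, h1]
        rw [Matrix.mul_assoc ((C₁ n)⁻¹ * U n ^ m) (C₁ n)]
        rw [← Matrix.mul_assoc (C₁ n), ← Matrix.mul_assoc (C₁ n),
          Matrix.mul_nonsing_inv _ (hd n), Matrix.one_mul]
        rw [Matrix.mul_assoc, Matrix.mul_assoc, Matrix.mul_assoc]
  rw [hpow k, Matrix.trace_mul_cycle, Matrix.mul_nonsing_inv _ (hd n), Matrix.one_mul]
end

section
/- Let C₁, C₂ : ℤ → M₃(ℝ) with C₂(n) invertible for every n, satisfying C₁(n)·C₂(n+1) = C₂(n)·C₁(n−1) for all n ∈ ℤ. Then the matrix V(n) := C₁(n−1)·C₂(n) satisfies V(n+1) = C₂(n)·V(n)·C₂(n)⁻¹, and consequently for every k ≥ 1 and every n, tr(V(n+1)ᵏ) = tr(V(n)ᵏ). -/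
/-- For `C₁, C₂ : ℤ → M₃(ℝ)` with each `C₂(n)` invertible,
satisfying `C₁(n)·C₂(n+1) = C₂(n)·C₁(n−1)`, the matrix `V(n) = C₁(n−1)·C₂(n)`
evolves by conjugation, `V(n+1) = C₂(n) V(n) C₂(n)⁻¹`, and consequently the
traces of all powers of `V` are invariant under the shift. -/
theorem stmt_17 (C₁ C₂ : ℤ → Matrix (Fin 3) (Fin 3) ℝ)
    (hinv : ∀ n : ℤ, IsUnit (C₂ n))
    (hLax : ∀ n : ℤ, C₁ n * C₂ (n + 1) = C₂ n * C₁ (n - 1))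
    (V : ℤ → Matrix (Fin 3) (Fin 3) ℝ)
    (hV : V = fun n => C₁ (n - 1) * C₂ n) :
    ∀ n : ℤ,
      V (n + 1) = C₂ n * V n * (C₂ n)⁻¹ ∧
      (∀ k : ℕ, 1 ≤ k → ((V (n + 1)) ^ k).trace = ((V n) ^ k).trace) := by
  intro n
  have hCinv : (C₂ n) * (C₂ n)⁻¹ = 1 :=
    Matrix.mul_nonsing_inv _ ((Matrix.isUnit_iff_isUnit_det _).mp (hinv n))
  have hinvC : (C₂ n)⁻¹ * (C₂ n) = 1 :=
    Matrix.nonsing_inv_mul _ ((Matrix.isUnit_iff_isUnit_det _).mp (hinv n))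
  have h1 : V (n + 1) = C₂ n * V n * (C₂ n)⁻¹ := by
    subst hV
    simp only [add_sub_cancel_right]
    calc C₁ n * C₂ (n + 1) = C₂ n * C₁ (n - 1) := hLax n
    _ = C₂ n * C₁ (n - 1) * (C₂ n * (C₂ n)⁻¹) := by rw [hCinv, mul_one]
    _ = C₂ n * (C₁ (n - 1) * C₂ n) * (C₂ n)⁻¹ := by simp only [mul_assoc]
  have hpow : ∀ k : ℕ, V (n + 1) ^ k = C₂ n * V n ^ k * (C₂ n)⁻¹ := by
    intro k
    rw [h1]
    induction k with
    | zero => simp [hCinv]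
    | succ m ih =>
      rw [pow_succ, pow_succ, ih]
      calc C₂ n * V n ^ m * (C₂ n)⁻¹ * (C₂ n * V n * (C₂ n)⁻¹)
          = C₂ n * V n ^ m * ((C₂ n)⁻¹ * C₂ n) * (V n * (C₂ n)⁻¹) := by
            simp only [mul_assoc]
        _ = C₂ n * V n ^ m * V n * (C₂ n)⁻¹ := by rw [hinvC, mul_one]; simp only [mul_assoc]
        _ = C₂ n * (V n ^ m * V n) * (C₂ n)⁻¹ := by simp only [mul_assoc]
  refine ⟨h1, fun k _ => ?_⟩
  rw [hpow k, Matrix.trace_mul_cycle, hinvC, one_mul]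
end

section
/- Let A, B, C, D, E, G, L, M, N be real numbers and let · be the unique commutative bilinear multiplication on ℝ³ with basis P₀, P₁, P₂ determined by: P₀ is a two-sided unit, P₁² = A P₀ + B P₁ + C P₂, P₁P₂ = P₂P₁ = D P₀ + E P₁ + G P₂, P₂² = L P₀ + M P₁ + N P₂. Then this multiplication is associative if and only if the matrices C₁ = [[0,A,D],[1,B,E],[0,C,G]] and C₂ = [[0,D,L],[0,E,M],[1,G,N]] commute: C₁C₂ = C₂C₁. -/
set_option maxHeartbeats 2000000

/-- On `ℝ³` with basis `P₀, P₁, P₂`, let `·` be the (unique)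
commutative bilinear multiplication with two-sided unit `P₀` and table
`P₁² = A P₀ + B P₁ + C P₂`, `P₁P₂ = P₂P₁ = D P₀ + E P₁ + G P₂`,
`P₂² = L P₀ + M P₁ + N P₂`; it is given by the structure-constant tensor
`c` via `(u·v)_l = ∑_{j,k} u_j v_k c_{jk}^l`. This multiplication is
associative iff the structure-constant matrices
`C₁ = [[0,A,D],[1,B,E],[0,C,G]]` and `C₂ = [[0,D,L],[0,E,M],[1,G,N]]`
commute. -/
theorem stmt_19 (A B C D E G L M N : ℝ)
    (c : Fin 3 → Fin 3 → Fin 3 → ℝ)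
    (hc : c = ![![![1, 0, 0], ![0, 1, 0], ![0, 0, 1]],
                ![![0, 1, 0], ![A, B, C], ![D, E, G]],
                ![![0, 0, 1], ![D, E, G], ![L, M, N]]])
    (mul : (Fin 3 → ℝ) → (Fin 3 → ℝ) → (Fin 3 → ℝ))
    (hmul : ∀ u v, mul u v = fun l => ∑ j : Fin 3, ∑ k : Fin 3, u j * v k * c j k l) :
    (∀ u v w : Fin 3 → ℝ, mul (mul u v) w = mul u (mul v w)) ↔
      !![(0:ℝ), A, D; 1, B, E; 0, C, G] * !![(0:ℝ), D, L; 0, E, M; 1, G, N] =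
      !![(0:ℝ), D, L; 0, E, M; 1, G, N] * !![(0:ℝ), A, D; 1, B, E; 0, C, G] := by
  subst hc
  constructor
  · intro h
    have h1 := h ![0,1,0] ![0,1,0] ![0,0,1]
    have h2 := h ![0,1,0] ![0,0,1] ![0,0,1]
    simp only [hmul, Fin.sum_univ_three] at h1 h2
    have e10 := congrFun h1 0
    have e11 := congrFun h1 1
    have e12 := congrFun h1 2
    have e20 := congrFun h2 0
    have e21 := congrFun h2 1
    simp [Fin.sum_univ_three] at e10 e11 e12 e20 e21
    ext i j
    fin_cases i <;> fin_cases j <;>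
      simp [Matrix.mul_apply, Fin.sum_univ_three] <;> nlinarith [e10, e11, e12, e20, e21]
  · intro h u v w
    have e := fun a b => congrFun (congrFun h a) b
    have e01 := e 0 1; have e02 := e 0 2; have e12 := e 1 2
    have e21 := e 2 1; have e22 := e 2 2
    simp [Matrix.mul_apply, Fin.sum_univ_three] at e01 e02 e12 e21 e22
    funext l
    simp only [hmul, Fin.sum_univ_three]
    fin_cases l <;> simp [Fin.sum_univ_three, Matrix.vecHead, Matrix.vecTail] <;> ring_nf
    · linear_combination (-(u 1 * v 1 * w 2) + u 2 * v 1 * w 1) * e01 +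
        (-(u 1 * v 2 * w 2) + u 2 * v 2 * w 1) * e02
    · linear_combination (u 1 * v 1 * w 2 - u 2 * v 1 * w 1) * e22 +
        (-(u 1 * v 2 * w 2) + u 2 * v 2 * w 1) * e12
    · linear_combination (-(u 1 * v 1 * w 2) + u 2 * v 1 * w 1) * e21 +
        (-(u 1 * v 2 * w 2) + u 2 * v 2 * w 1) * e22
end
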